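/- The q-difference operator in the variable x applied to Ψ₁ gives D_{x,q} Ψ₁(q^a,p^b;p^c,q^d;q,p,x,y) = [(1−q^a)/((1−q)(1−q^d))]·Ψ₁(q^{a+1},p^b;p^c,q^{d+1};q,p,x,y), and more generally iterating r times, D_{x,q}^r Ψ₁(q^a,p^b;p^c,q^d;q,p,x,y) = [(q^a;q)_r / ((1−q)^r (q^d;q)_r)]·Ψ₁(q^{a+r},p^b;p^c,q^{d+r};q,p,x,y). -/

import Mathlib

open scoped BigOperators
open Filter

/-- q-shifted factorial `(z;q)_k`. -/
noncomputable def qPoch (q z : ℂ) (k : ℕ) : ℂ :=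
  ∏ r ∈ Finset.range k, (1 - z * q ^ r)

/-- infinite q-shifted factorial `(z;q)_∞`. -/
noncomputable def qPochInf (q z : ℂ) : ℂ := ∏' r : ℕ, (1 - z * q ^ r)

/-- bibasic Humbert function `Ψ₁(A,B;C,D;q,p,x,y)` with `A=qᵃ, B=pᵇ, C=pᶜ, D=q^d`. -/
noncomputable def Psi1 (q p A B C D x y : ℂ) : ℂ :=
  ∑' kl : ℕ × ℕ,
    qPoch q A (kl.1 + kl.2) * qPoch p B kl.2 /
      (qPoch p C kl.2 * qPoch q D kl.1 * qPoch q q kl.1 * qPoch p p kl.2) *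
      x ^ kl.1 * y ^ kl.2

/-- bibasic Humbert function `Ψ₂(A;B,C;q,p,x,y)` with `A=qᵃ, B=pᵇ, C=qᶜ`. -/
noncomputable def Psi2 (q p A B C x y : ℂ) : ℂ :=
  ∑' kl : ℕ × ℕ,
    qPoch q A (kl.1 + kl.2) /
      (qPoch p B kl.2 * qPoch q C kl.1 * qPoch q q kl.1 * qPoch p p kl.2) *
      x ^ kl.1 * y ^ kl.2

/-- the q-difference operator `D_{x,q}`. -/
noncomputable def qDiff (q : ℂ) (f : ℂ → ℂ) : ℂ → ℂ :=
  fun x => (f x - f (q * x)) / ((1 - q) * x)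

/-- basic hypergeometric series `₂φ₁(A,B;C;q,x)`. -/
noncomputable def phi21 (q A B C x : ℂ) : ℂ :=
  ∑' k : ℕ, qPoch q A k * qPoch q B k / (qPoch q C k * qPoch q q k) * x ^ k

/-- basic confluent hypergeometric series `₁φ₁(A;C;q,z)`. -/
noncomputable def phi11 (q A C z : ℂ) : ℂ :=
  ∑' k : ℕ, qPoch q A k / (qPoch q C k * qPoch q q k) *
    (-1) ^ k * q ^ (k * (k - 1) / 2) * z ^ k

/-!
Both identities are termwise. `D_{x,q}` sends `x^k` to `(1 - q^k)/(1 - q) · x^(k-1)`, which kills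
the terms with `k = 0`; after the shift `k ↦ k + 1` the factor `1 - q^(k+1)` cancels against
`(q;q)_(k+1)`, and peeling the first factors off `(q^a;q)_(k+1+l)` and `(q^d;q)_(k+1)` leaves
`(1 - q^a)/((1 - q)(1 - q^d))` times the coefficients of `Ψ₁` with `a, d` raised by one. The
`r`-fold identity follows by induction, using `(z;q)_(r+1) = (z;q)_r (1 - z q^r)`.

Applying `D_{x,q}` under the double sum needs absolute convergence for `|x|, |y| < 1`: the partial
products `(z;q)_k` converge, and so do their inverses (to `0` if some factor vanishes), so the
coefficients of `Ψ₁` are bounded.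
-/

open Topology

section QPochhammer

variable {q : ℂ}

lemma qPoch_succ (q z : ℂ) (k : ℕ) :
    qPoch q z (k + 1) = (1 - z) * qPoch q (z * q) k := by
  rw [qPoch, Finset.prod_range_succ', pow_zero, mul_one, mul_comm]
  congr 1
  exact Finset.prod_congr rfl fun r _ => by rw [pow_succ']; ring

lemma qPoch_succ' (q z : ℂ) (k : ℕ) :
    qPoch q z (k + 1) = qPoch q z k * (1 - z * q ^ k) :=
  Finset.prod_range_succ _ _

lemma summable_norm_mul_pow (z : ℂ) (hq : ‖q‖ < 1) : Summable fun r : ℕ ↦ ‖z * q ^ r‖ := by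
  simpa [norm_mul, norm_pow] using (summable_geometric_of_lt_one (norm_nonneg q) hq).mul_left ‖z‖

lemma multipliable_one_sub_mul_pow (z : ℂ) (hq : ‖q‖ < 1) :
    Multipliable fun r : ℕ ↦ 1 - z * q ^ r := by
  simpa [sub_eq_add_neg] using
    multipliable_one_add_of_summable (f := fun r : ℕ ↦ -(z * q ^ r))
      (by simpa using summable_norm_mul_pow z hq)

lemma tendsto_qPoch_qPochInf (z : ℂ) (hq : ‖q‖ < 1) :
    Tendsto (qPoch q z) atTop (𝓝 (qPochInf q z)) :=
  (multipliable_one_sub_mul_pow z hq).hasProd.tendsto_prod_nat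

lemma qPochInf_ne_zero {z : ℂ} (hq : ‖q‖ < 1) (hz : ∀ r : ℕ, 1 - z * q ^ r ≠ 0) :
    qPochInf q z ≠ 0 := by
  simpa [qPochInf, sub_eq_add_neg] using
    tprod_one_add_ne_zero_of_summable (f := fun r : ℕ ↦ -(z * q ^ r))
      (by simpa [sub_eq_add_neg] using hz) (by simpa using summable_norm_mul_pow z hq)

lemma exists_tendsto_inv_qPoch (z : ℂ) (hq : ‖q‖ < 1) :
    ∃ L, Tendsto (fun k ↦ (qPoch q z k)⁻¹) atTop (𝓝 L) := by
  by_cases hz : ∃ r : ℕ, 1 - z * q ^ r = 0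
  · obtain ⟨r, hr⟩ := hz
    refine ⟨0, tendsto_const_nhds.congr' ?_⟩
    filter_upwards [eventually_gt_atTop r] with k hk
    rw [qPoch, Finset.prod_eq_zero (Finset.mem_range.2 hk) hr, inv_zero]
  · simp only [not_exists] at hz
    exact ⟨_, (tendsto_qPoch_qPochInf z hq).inv₀ (qPochInf_ne_zero hq hz)⟩

lemma exists_norm_le_of_tendsto {E : Type*} [SeminormedAddCommGroup E] {u : ℕ → E} {L : E} (hu : Tendsto u atTop (𝓝 L)) :
    ∃ M, ∀ k, ‖u k‖ ≤ M := by
  obtain ⟨M, hM⟩ := (Metric.isBounded_range_of_tendsto u hu).exists_norm_le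
  exact ⟨M, fun k ↦ hM _ ⟨k, rfl⟩⟩

lemma exists_norm_qPoch_le (z : ℂ) (hq : ‖q‖ < 1) : ∃ M, ∀ k, ‖qPoch q z k‖ ≤ M :=
  exists_norm_le_of_tendsto (tendsto_qPoch_qPochInf z hq)

lemma exists_norm_inv_qPoch_le (z : ℂ) (hq : ‖q‖ < 1) : ∃ M, ∀ k, ‖(qPoch q z k)⁻¹‖ ≤ M :=
  let ⟨_, hL⟩ := exists_tendsto_inv_qPoch z hq
  exists_norm_le_of_tendsto hL

end QPochhammer

lemma qDiff_const_mul (q c : ℂ) (f : ℂ → ℂ) :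
    qDiff q (fun t ↦ c * f t) = fun t ↦ c * qDiff q f t := by
  ext t
  simp only [qDiff, ← mul_sub, mul_div_assoc]

lemma Set.EqOn.qDiff {q : ℂ} {f g : ℂ → ℂ} {s : Set ℂ} (hs : Set.MapsTo (q * ·) s s)
    (h : Set.EqOn f g s) : Set.EqOn (qDiff q f) (qDiff q g) s := fun t ht ↦ by
  simp only [_root_.qDiff, h ht, h (hs ht)]

lemma qDiff_tsum_mul_pow_mul_pow {q x y : ℂ} {c : ℕ × ℕ → ℂ} (hx : x ≠ 0)
    (hsx : Summable fun kl : ℕ × ℕ ↦ c kl * x ^ kl.1 * y ^ kl.2)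
    (hsqx : Summable fun kl : ℕ × ℕ ↦ c kl * (q * x) ^ kl.1 * y ^ kl.2) :
    qDiff q (fun t ↦ ∑' kl : ℕ × ℕ, c kl * t ^ kl.1 * y ^ kl.2) x =
      ∑' kl : ℕ × ℕ, c (kl.1 + 1, kl.2) * ((1 - q ^ (kl.1 + 1)) / (1 - q)) *
        x ^ kl.1 * y ^ kl.2 := by
  set f : ℕ × ℕ → ℂ := fun kl ↦ c kl * ((1 - q ^ kl.1) / (1 - q)) * x ^ kl.1 * y ^ kl.2 / x
  have hsupp : Function.support f ⊆ Set.range (Prod.map Nat.succ id) := by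
    rintro ⟨_ | k, l⟩ hkl
    · simp [f] at hkl
    · exact ⟨(k, l), rfl⟩
  have hf : ∀ kl : ℕ × ℕ, f (kl.1 + 1, kl.2) =
      c (kl.1 + 1, kl.2) * ((1 - q ^ (kl.1 + 1)) / (1 - q)) * x ^ kl.1 * y ^ kl.2 := by
    intro kl
    simp only [f, pow_succ]
    field_simp
  calc qDiff q (fun t ↦ ∑' kl : ℕ × ℕ, c kl * t ^ kl.1 * y ^ kl.2) x
      = ∑' kl, f kl := by
        rw [qDiff, ← hsx.tsum_sub hsqx, ← tsum_div_const]
        congr 1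
        ext kl
        simp only [f, mul_pow, div_eq_mul_inv, mul_inv]
        ring
    _ = ∑' kl, f (Prod.map Nat.succ id kl) :=
        ((Nat.succ_injective.prodMap Function.injective_id).tsum_eq hsupp).symm
    _ = _ := tsum_congr fun kl ↦ hf kl

lemma summable_mul_pow_mul_pow_of_norm_le {𝕜 : Type*} [NormedField 𝕜] [CompleteSpace 𝕜]
    {c : ℕ × ℕ → 𝕜} {K : ℝ} (hc : ∀ kl, ‖c kl‖ ≤ K) {x y : 𝕜} (hx : ‖x‖ < 1) (hy : ‖y‖ < 1) :
    Summable fun kl : ℕ × ℕ ↦ c kl * x ^ kl.1 * y ^ kl.2 := by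
  have hgeom : Summable fun kl : ℕ × ℕ ↦ ‖x‖ ^ kl.1 * ‖y‖ ^ kl.2 :=
    (summable_geometric_of_lt_one (norm_nonneg x) hx).mul_of_nonneg
      (summable_geometric_of_lt_one (norm_nonneg y) hy)
      (fun _ ↦ by positivity) (fun _ ↦ by positivity)
  refine (hgeom.mul_left K).of_norm_bounded fun kl ↦ ?_
  rw [norm_mul, norm_mul, norm_pow, norm_pow, mul_assoc]
  gcongr
  exact hc kl

noncomputable def psi1Coeff (q p A B C D : ℂ) (k l : ℕ) : ℂ :=
  qPoch q A (k + l) * qPoch p B l /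
    (qPoch p C l * qPoch q D k * qPoch q q k * qPoch p p l)

lemma Psi1_eq_tsum (q p A B C D x y : ℂ) :
    Psi1 q p A B C D x y = ∑' kl : ℕ × ℕ, psi1Coeff q p A B C D kl.1 kl.2 * x ^ kl.1 * y ^ kl.2 :=
  rfl

lemma exists_norm_psi1Coeff_le {q p : ℂ} (A B C D : ℂ) (hq : ‖q‖ < 1) (hp : ‖p‖ < 1) :
    ∃ K, ∀ kl : ℕ × ℕ, ‖psi1Coeff q p A B C D kl.1 kl.2‖ ≤ K := by
  obtain ⟨MA, hA⟩ := exists_norm_qPoch_le A hq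
  obtain ⟨MB, hB⟩ := exists_norm_qPoch_le B hp
  obtain ⟨MC, hC⟩ := exists_norm_inv_qPoch_le C hp
  obtain ⟨MD, hD⟩ := exists_norm_inv_qPoch_le D hq
  obtain ⟨Mq, hQ⟩ := exists_norm_inv_qPoch_le q hq
  obtain ⟨Mp, hP⟩ := exists_norm_inv_qPoch_le p hp
  refine ⟨MA * MB * (MC * MD * Mq * Mp), fun ⟨k, l⟩ ↦ ?_⟩
  rw [psi1Coeff, div_eq_mul_inv]
  simp only [mul_inv, norm_mul]
  have hMA : 0 ≤ MA := (norm_nonneg _).trans (hA 0)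
  have hMB : 0 ≤ MB := (norm_nonneg _).trans (hB 0)
  have hMC : 0 ≤ MC := (norm_nonneg _).trans (hC 0)
  have hMD : 0 ≤ MD := (norm_nonneg _).trans (hD 0)
  have hMq : 0 ≤ Mq := (norm_nonneg _).trans (hQ 0)
  gcongr
  exacts [hA _, hB _, hC _, hD _, hQ _, hP _]

lemma summable_psi1Coeff_mul_pow_mul_pow {q p : ℂ} (A B C D : ℂ) (hq : ‖q‖ < 1) (hp : ‖p‖ < 1)
    {x y : ℂ} (hx : ‖x‖ < 1) (hy : ‖y‖ < 1) :
    Summable fun kl : ℕ × ℕ ↦ psi1Coeff q p A B C D kl.1 kl.2 * x ^ kl.1 * y ^ kl.2 :=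
  let ⟨_, hK⟩ := exists_norm_psi1Coeff_le A B C D hq hp
  summable_mul_pow_mul_pow_of_norm_le hK hx hy

/-- If `D = 1`, both sides vanish, the right one through the junk value `(1 - D)⁻¹ = 0`. -/
lemma psi1Coeff_succ_left_mul {q : ℂ} (p A B C D : ℂ) (k l : ℕ) (hqk : q ^ (k + 1) ≠ 1) :
    psi1Coeff q p A B C D (k + 1) l * ((1 - q ^ (k + 1)) / (1 - q)) =
      (1 - A) / ((1 - q) * (1 - D)) * psi1Coeff q p (A * q) B C (D * q) k l := by
  have hqk' : (1 - q ^ (k + 1)) * (1 - q ^ (k + 1))⁻¹ = 1 :=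
    mul_inv_cancel₀ (sub_ne_zero.2 hqk.symm)
  rw [psi1Coeff, psi1Coeff, show k + 1 + l = k + l + 1 by omega, qPoch_succ, qPoch_succ,
    qPoch_succ' q q k, ← pow_succ']
  simp only [div_eq_mul_inv, mul_inv]
  linear_combination (1 - A) * qPoch q (A * q) (k + l) * qPoch p B l * (qPoch p C l)⁻¹ *
    (1 - D)⁻¹ * (qPoch q (D * q) k)⁻¹ * (qPoch q q k)⁻¹ * (qPoch p p l)⁻¹ * (1 - q)⁻¹ * hqk'

lemma norm_mul_lt_one {q x : ℂ} (hq : ‖q‖ ≤ 1) (hx : ‖x‖ < 1) : ‖q * x‖ < 1 := by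
  rw [norm_mul]
  exact (mul_le_of_le_one_left (norm_nonneg x) hq).trans_lt hx

lemma qDiff_Psi1 {q p : ℂ} (A B C D y : ℂ) (hq : ‖q‖ < 1) (hp : ‖p‖ < 1) (hy : ‖y‖ < 1) :
    Set.EqOn (qDiff q fun t ↦ Psi1 q p A B C D t y)
      (fun t ↦ (1 - A) / ((1 - q) * (1 - D)) * Psi1 q p (A * q) B C (D * q) t y)
      (Metric.ball 0 1 \ {0}) := by
  rintro x ⟨hx, hx0 : x ≠ 0⟩
  rw [mem_ball_zero_iff] at hx
  have hqx : ‖q * x‖ < 1 := norm_mul_lt_one hq.le hx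
  simp only [Psi1_eq_tsum]
  rw [qDiff_tsum_mul_pow_mul_pow hx0 (summable_psi1Coeff_mul_pow_mul_pow A B C D hq hp hx hy)
    (summable_psi1Coeff_mul_pow_mul_pow A B C D hq hp hqx hy), ← tsum_mul_left]
  refine tsum_congr fun kl ↦ ?_
  have hqk : q ^ (kl.1 + 1) ≠ 1 := fun h ↦
    (pow_lt_one₀ (norm_nonneg q) hq kl.1.succ_ne_zero).ne (by rw [← norm_pow, h, norm_one])
  rw [psi1Coeff_succ_left_mul p A B C D kl.1 kl.2 hqk]
  ring

lemma iterate_qDiff_Psi1 {q p : ℂ} (A B C D y : ℂ) (hq0 : q ≠ 0) (hq : ‖q‖ < 1) (hp : ‖p‖ < 1)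
    (hy : ‖y‖ < 1) (r : ℕ) :
    Set.EqOn ((qDiff q)^[r] fun t ↦ Psi1 q p A B C D t y)
      (fun t ↦ qPoch q A r / ((1 - q) ^ r * qPoch q D r) *
        Psi1 q p (A * q ^ r) B C (D * q ^ r) t y)
      (Metric.ball 0 1 \ {0}) := by
  have hmaps : Set.MapsTo (q * ·) (Metric.ball 0 1 \ {0}) (Metric.ball 0 1 \ {0}) := by
    rintro x ⟨hx, hx0 : x ≠ 0⟩
    rw [mem_ball_zero_iff] at hx
    exact ⟨mem_ball_zero_iff.2 (norm_mul_lt_one hq.le hx), mul_ne_zero hq0 hx0⟩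
  induction r with
  | zero => intro t _; simp [qPoch]
  | succ n ih =>
    intro t ht
    rw [Function.iterate_succ_apply', (ih.qDiff hmaps) ht, qDiff_const_mul]
    dsimp only
    rw [qDiff_Psi1 _ B C _ y hq hp hy ht, qPoch_succ' q A, qPoch_succ' q D, pow_succ q n,
      pow_succ (1 - q) n, ← mul_assoc A, ← mul_assoc D]
    simp only [div_eq_mul_inv, mul_inv]
    ring

theorem stmt7_general (q p a b c d x y : ℂ) (r : ℕ)
    (hq0 : 0 < ‖q‖) (hq1 : ‖q‖ < 1)
    (hp1 : ‖p‖ < 1)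
    (hx : ‖x‖ < 1) (hy : ‖y‖ < 1) (hx0 : x ≠ 0) :
    qDiff q (fun t => Psi1 q p (q ^ a) (p ^ b) (p ^ c) (q ^ d) t y) x =
        (1 - q ^ a) / ((1 - q) * (1 - q ^ d)) *
          Psi1 q p (q ^ (a + 1)) (p ^ b) (p ^ c) (q ^ (d + 1)) x y ∧
      (qDiff q)^[r] (fun t => Psi1 q p (q ^ a) (p ^ b) (p ^ c) (q ^ d) t y) x =
        qPoch q (q ^ a) r / ((1 - q) ^ r * qPoch q (q ^ d) r) *
          Psi1 q p (q ^ (a + (r : ℂ))) (p ^ b) (p ^ c) (q ^ (d + (r : ℂ))) x y := by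
  have hq : q ≠ 0 := norm_pos_iff.1 hq0
  have hxS : x ∈ Metric.ball 0 1 \ {0} := ⟨mem_ball_zero_iff.2 hx, hx0⟩
  have hcpow (z : ℂ) (n : ℕ) : q ^ (z + n) = q ^ z * q ^ n := by
    rw [Complex.cpow_add _ _ hq, Complex.cpow_natCast]
  have hcpow_one (z : ℂ) : q ^ (z + 1) = q ^ z * q := by simpa using hcpow z 1
  constructor
  · rw [hcpow_one, hcpow_one]
    exact qDiff_Psi1 _ _ _ _ y hq1 hp1 hy hxS
  · rw [hcpow, hcpow]
    exact iterate_qDiff_Psi1 _ _ _ _ y hq hq1 hp1 hy r hxS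

theorem stmt7 (q p a b c d x y : ℂ) (r : ℕ)
    (hq0 : 0 < ‖q‖) (hq1 : ‖q‖ < 1)
    (hp0 : 0 < ‖p‖) (hp1 : ‖p‖ < 1)
    (hx : ‖x‖ < 1) (hy : ‖y‖ < 1) (hx0 : x ≠ 0) :
    qDiff q (fun t => Psi1 q p (q ^ a) (p ^ b) (p ^ c) (q ^ d) t y) x =
        (1 - q ^ a) / ((1 - q) * (1 - q ^ d)) *
          Psi1 q p (q ^ (a + 1)) (p ^ b) (p ^ c) (q ^ (d + 1)) x y ∧
      (qDiff q)^[r] (fun t => Psi1 q p (q ^ a) (p ^ b) (p ^ c) (q ^ d) t y) x =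
        qPoch q (q ^ a) r / ((1 - q) ^ r * qPoch q (q ^ d) r) *
          Psi1 q p (q ^ (a + (r : ℂ))) (p ^ b) (p ^ c) (q ^ (d + (r : ℂ))) x y :=
  stmt7_general q p a b c d x y r hq0 hq1 hp1 hx hy hx0
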